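/- Let a, b, c, d be positive integers. The pair (X, Oz) associated to the complex surface V = {(x,y,z) ∈ ℂ³ : y^a = z^b·x^c + x^d} is Kuo–Verdier (w)-regular at the origin if and only if a = 1 or d ≤ c. -/

import Mathlib

open Filter

noncomputable section

/-- x-partial derivative of f(x,y,z) = y^a - z^b*x^c - x^d. -/
def fxC (b c d : ℕ) (x z : ℂ) : ℂ :=
  -(c : ℂ) * z ^ b * x ^ (c - 1) - (d : ℂ) * x ^ (d - 1)

/-- y-partial derivative of f. -/
def fyC (a : ℕ) (y : ℂ) : ℂ := (a : ℂ) * y ^ (a - 1)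

/-- z-partial derivative of f. -/
def fzC (b c : ℕ) (x z : ℂ) : ℂ := -(b : ℂ) * z ^ (b - 1) * x ^ c

/-- Hermitian norm on ℂ³. -/
def nrm3C (u v w : ℂ) : ℝ := Real.sqrt (‖u‖ ^ 2 + ‖v‖ ^ 2 + ‖w‖ ^ 2)

/-- Hermitian norm on ℂ². -/
def nrm2C (u v : ℂ) : ℝ := Real.sqrt (‖u‖ ^ 2 + ‖v‖ ^ 2)

/-- Norm of the gradient ∇f(x,y,z). -/
def gradNormC (a b c d : ℕ) (x y z : ℂ) : ℝ :=
  nrm3C (fxC b c d x z) (fyC a y) (fzC b c x z)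

/-- The gradient ∇f(x,y,z) is nonzero. -/
def gradNeC (a b c d : ℕ) (x y z : ℂ) : Prop :=
  ¬ (fxC b c d x z = 0 ∧ fyC a y = 0 ∧ fzC b c x z = 0)

/-- Membership in X = V \ Oz, where V = {y^a = z^b x^c + x^d} and Oz is the z-axis. -/
def inXC (a b c d : ℕ) (x y z : ℂ) : Prop :=
  y ^ a = z ^ b * x ^ c + x ^ d ∧ ¬ (x = 0 ∧ y = 0)

/-- Whitney (a)-regularity of the pair (X, Oz) at the origin. -/
def aRegC (a b c d : ℕ) : Prop :=
  ∀ x y z : ℕ → ℂ,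
    (∀ n, inXC a b c d (x n) (y n) (z n)) →
    Tendsto (fun n => (x n, y n, z n)) atTop (nhds ((0 : ℂ), (0 : ℂ), (0 : ℂ))) →
    (∀ n, gradNeC a b c d (x n) (y n) (z n)) →
    Tendsto (fun n => ‖fzC b c (x n) (z n)‖ / gradNormC a b c d (x n) (y n) (z n))
      atTop (nhds 0)

/-- The (bᵖⁱ) condition for the retraction π(x,y,z) = (0,0,z). -/
def bpiC (a b c d : ℕ) : Prop :=
  ∀ x y z : ℕ → ℂ,
    (∀ n, inXC a b c d (x n) (y n) (z n)) →
    Tendsto (fun n => (x n, y n, z n)) atTop (nhds ((0 : ℂ), (0 : ℂ), (0 : ℂ))) →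
    (∀ n, gradNeC a b c d (x n) (y n) (z n)) →
    Tendsto (fun n => ‖x n * fxC b c d (x n) (z n) + y n * fyC a (y n)‖ /
        (nrm2C (x n) (y n) * gradNormC a b c d (x n) (y n) (z n)))
      atTop (nhds 0)

/-- Whitney (b)-regularity of the pair (X, Oz) at the origin. -/
def bRegC (a b c d : ℕ) : Prop := aRegC a b c d ∧ bpiC a b c d

/-- Kuo–Verdier (w)-regularity of the pair (X, Oz) at the origin. -/
def wRegC (a b c d : ℕ) : Prop :=
  ∃ C : ℝ, 0 < C ∧ ∃ ε : ℝ, 0 < ε ∧ ∀ x y z : ℂ,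
    inXC a b c d x y z → nrm3C x y z < ε → gradNeC a b c d x y z →
    ‖fzC b c x z‖ ≤ C * nrm2C x y * gradNormC a b c d x y z

/-!
If `a = 1` then `∂f/∂y = 1`, so `‖∇f‖ ≥ 1` while `|∂f/∂z| ≤ b |x| ^ c ≤ b |x|`. If `d ≤ c`, then
`∂f/∂x = -x ^ (d - 1) (d + c z ^ b x ^ (c - d))` has modulus at least `(d / 2) |x| ^ (d - 1)` near the
origin, while `|∂f/∂z| ≤ b |x| ^ c ≤ b |x| · |x| ^ (d - 1)`. In both cases `|∂f/∂z| ≤ C |x| ‖∇f‖`.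

Conversely, if `a ≥ 2` and `c < d`, the curve `t ↦ (t ^ b, 0, ζ t ^ (d - c))` with `ζ ^ b = -1` lies
in `X`, and on it `∇f = (-(d - c) x ^ (d - 1), 0, ∂f/∂z)`. There the (w) inequality with constant `C`
reduces to `b ≤ C ((d - c) |z| + b |x|)`, which fails as `t → 0`.
-/

open Topology

lemma norm_le_nrm3C_fst (u v w : ℂ) : ‖u‖ ≤ nrm3C u v w :=
  Real.le_sqrt_of_sq_le (by nlinarith [sq_nonneg ‖v‖, sq_nonneg ‖w‖])

lemma norm_le_nrm3C_snd (u v w : ℂ) : ‖v‖ ≤ nrm3C u v w :=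
  Real.le_sqrt_of_sq_le (by nlinarith [sq_nonneg ‖u‖, sq_nonneg ‖w‖])

lemma norm_le_nrm3C_thd (u v w : ℂ) : ‖w‖ ≤ nrm3C u v w :=
  Real.le_sqrt_of_sq_le (by nlinarith [sq_nonneg ‖u‖, sq_nonneg ‖v‖])

lemma nrm3C_le_add (u v w : ℂ) : nrm3C u v w ≤ ‖u‖ + ‖v‖ + ‖w‖ :=
  (Real.sqrt_le_left (by positivity)).2 (by nlinarith [norm_nonneg u, norm_nonneg v, norm_nonneg w])

lemma norm_le_nrm2C_fst (u v : ℂ) : ‖u‖ ≤ nrm2C u v :=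
  Real.le_sqrt_of_sq_le (by nlinarith [sq_nonneg ‖v‖])

lemma nrm2C_zero_right (u : ℂ) : nrm2C u 0 = ‖u‖ := by
  simp [nrm2C, Real.sqrt_sq (norm_nonneg u)]

section Partials

variable {a b c d : ℕ}

lemma norm_fzC (x z : ℂ) : ‖fzC b c x z‖ = b * ‖z‖ ^ (b - 1) * ‖x‖ ^ c := by
  simp [fzC]

lemma norm_fzC_le {x z : ℂ} (hz : ‖z‖ ≤ 1) : ‖fzC b c x z‖ ≤ b * ‖x‖ ^ c := by
  rw [norm_fzC]
  gcongr
  exact mul_le_of_le_one_right (Nat.cast_nonneg b) (pow_le_one₀ (norm_nonneg z) hz)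

lemma fyC_one (y : ℂ) : fyC 1 y = 1 := by
  simp [fyC]

lemma fyC_zero (ha : 2 ≤ a) : fyC a 0 = 0 := by
  simp [fyC, zero_pow (by omega : a - 1 ≠ 0)]

lemma fxC_of_pow_eq_neg {k : ℕ} {x z : ℂ} (hc : 0 < c) (hz : z ^ b = -x ^ k) :
    fxC b c (c + k) x z = -(k : ℂ) * x ^ (c + k - 1) := by
  obtain ⟨c, rfl⟩ := Nat.exists_eq_add_one.2 hc
  rw [fxC, hz, show c + 1 + k - 1 = c + k by omega, Nat.add_sub_cancel]
  push_cast
  ring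

lemma norm_fxC_le_gradNormC (x y z : ℂ) : ‖fxC b c d x z‖ ≤ gradNormC a b c d x y z :=
  norm_le_nrm3C_fst _ _ _

lemma norm_fyC_le_gradNormC (x y z : ℂ) : ‖fyC a y‖ ≤ gradNormC a b c d x y z :=
  norm_le_nrm3C_snd _ _ _

end Partials

section Sufficiency

variable {a b c d : ℕ}

lemma wRegC_of_norm_fzC_le {C ε : ℝ} (hC : 0 < C) (hε : 0 < ε)
    (h : ∀ x y z : ℂ, ‖x‖ < ε → ‖z‖ < ε →
      ‖fzC b c x z‖ ≤ C * ‖x‖ * gradNormC a b c d x y z) :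
    wRegC a b c d := by
  refine ⟨C, hC, ε, hε, fun x y z _ hp _ => ?_⟩
  refine (h x y z ((norm_le_nrm3C_fst x y z).trans_lt hp)
    ((norm_le_nrm3C_thd x y z).trans_lt hp)).trans ?_
  gcongr
  · exact Real.sqrt_nonneg _
  · exact norm_le_nrm2C_fst x y

lemma wRegC_one (hc : 0 < c) : wRegC 1 b c d := by
  refine wRegC_of_norm_fzC_le (C := b + 1) (ε := 1) (by positivity) one_pos
    fun x y z hx hz => ?_
  have hgrad : 1 ≤ gradNormC 1 b c d x y z :=
    calc (1 : ℝ) = ‖fyC 1 y‖ := by rw [fyC_one, norm_one]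
      _ ≤ _ := norm_fyC_le_gradNormC x y z
  calc ‖fzC b c x z‖ ≤ b * ‖x‖ ^ c := norm_fzC_le hz.le
    _ ≤ (b + 1) * ‖x‖ * 1 := by
      rw [mul_one]
      gcongr
      · linarith
      · exact pow_le_of_le_one (norm_nonneg x) hx.le hc.ne'
    _ ≤ (b + 1) * ‖x‖ * gradNormC 1 b c d x y z := by gcongr

lemma half_mul_pow_le_norm_fxC {x z : ℂ} (hd : 0 < d) (hdc : d ≤ c) (hx : ‖x‖ ≤ 1)
    (hz : c * ‖z‖ ^ b ≤ d / 2) :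
    d / 2 * ‖x‖ ^ (d - 1) ≤ ‖fxC b c d x z‖ := by
  have hfx : fxC b c d x z = -((c : ℂ) * z ^ b * x ^ (c - d) + d) * x ^ (d - 1) := by
    rw [fxC, show c - 1 = (c - d) + (d - 1) by omega, pow_add]
    ring
  have hsmall : ‖(c : ℂ) * z ^ b * x ^ (c - d)‖ ≤ d / 2 := by
    rw [norm_mul, norm_mul, norm_pow, norm_pow, Complex.norm_natCast]
    exact (mul_le_of_le_one_right (by positivity) (pow_le_one₀ (norm_nonneg x) hx)).trans hz
  have hfactor : d / 2 ≤ ‖(c : ℂ) * z ^ b * x ^ (c - d) + d‖ := by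
    have := norm_sub_norm_le (d : ℂ) (-((c : ℂ) * z ^ b * x ^ (c - d)))
    rw [Complex.norm_natCast, norm_neg, sub_neg_eq_add, add_comm] at this
    linarith
  rw [hfx, norm_mul, norm_neg, norm_pow]
  gcongr

lemma wRegC_of_le (hb : 0 < b) (hd : 0 < d) (hdc : d ≤ c) : wRegC a b c d := by
  have hc : (0 : ℝ) < c := by exact_mod_cast hd.trans_le hdc
  refine wRegC_of_norm_fzC_le (C := 2 * b / d) (ε := min 1 (d / (2 * c)))
    (by positivity) (by positivity) fun x y z hx hz => ?_
  have hx1 : ‖x‖ ≤ 1 := hx.le.trans (min_le_left _ _)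
  have hz1 : ‖z‖ ≤ 1 := hz.le.trans (min_le_left _ _)
  have hzb : c * ‖z‖ ^ b ≤ d / 2 :=
    calc c * ‖z‖ ^ b ≤ c * (d / (2 * c)) := by
          gcongr
          exact (pow_le_of_le_one (norm_nonneg z) hz1 hb.ne').trans
            (hz.le.trans (min_le_right _ _))
      _ = d / 2 := by field_simp
  have hfx := (half_mul_pow_le_norm_fxC hd hdc hx1 hzb).trans
    (norm_fxC_le_gradNormC (a := a) x y z)
  calc ‖fzC b c x z‖ ≤ b * ‖x‖ ^ c := norm_fzC_le hz1
    _ ≤ b * (‖x‖ * ‖x‖ ^ (d - 1)) := by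
      rw [← pow_succ', Nat.sub_add_cancel hd]
      exact mul_le_mul_of_nonneg_left (pow_le_pow_of_le_one (norm_nonneg x) hx1 hdc) b.cast_nonneg
    _ = 2 * b / d * ‖x‖ * (d / 2 * ‖x‖ ^ (d - 1)) := by field_simp
    _ ≤ 2 * b / d * ‖x‖ * gradNormC a b c d x y z := by gcongr

end Sufficiency

section Necessity

variable {a b c k : ℕ} {x z : ℂ}

lemma inXC_of_pow_eq_neg (ha : 0 < a) (hx : x ≠ 0) (hz : z ^ b = -x ^ k) :
    inXC a b c (c + k) x 0 z := by
  refine ⟨?_, fun h => hx h.1⟩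
  rw [hz, zero_pow ha.ne']
  ring

lemma gradNeC_of_pow_eq_neg (hc : 0 < c) (hk : 0 < k) (hx : x ≠ 0) (hz : z ^ b = -x ^ k) :
    gradNeC a b c (c + k) x 0 z := fun h => by
  simpa [fxC_of_pow_eq_neg hc hz, hk.ne', hx] using h.1

lemma le_of_norm_fzC_le_of_pow_eq_neg (ha : 2 ≤ a) (hb : 0 < b) (hc : 0 < c) {C : ℝ}
    (hC : 0 ≤ C) (hx : x ≠ 0) (hz : z ^ b = -x ^ k)
    (hw : ‖fzC b c x z‖ ≤ C * nrm2C x 0 * gradNormC a b c (c + k) x 0 z) :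
    (b : ℝ) ≤ C * (k * ‖z‖ + b * ‖x‖) := by
  have hgrad : gradNormC a b c (c + k) x 0 z ≤
      k * ‖x‖ ^ (c + k - 1) + b * ‖z‖ ^ (b - 1) * ‖x‖ ^ c :=
    calc gradNormC a b c (c + k) x 0 z
        ≤ ‖fxC b c (c + k) x z‖ + ‖fyC a 0‖ + ‖fzC b c x z‖ := nrm3C_le_add _ _ _
      _ = _ := by
        rw [fxC_of_pow_eq_neg hc hz, fyC_zero ha, norm_fzC, norm_mul, norm_neg, norm_pow,
          Complex.norm_natCast, norm_zero, add_zero]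
  rw [norm_fzC, nrm2C_zero_right] at hw
  set X := ‖x‖
  set Z := ‖z‖
  have hZ : Z * Z ^ (b - 1) = X ^ k := by
    rw [mul_pow_sub_one hb.ne', ← norm_pow, hz, norm_neg, norm_pow]
  have hX : X * X ^ (c + k - 1) = X ^ (c + k) := mul_pow_sub_one (by omega) X
  -- after multiplying by `‖z‖`, every term carries the factor `‖x‖ ^ (c + k)`
  have key : b * X ^ (c + k) ≤ C * (k * Z + b * X) * X ^ (c + k) :=
    calc (b : ℝ) * X ^ (c + k) = Z * (b * Z ^ (b - 1) * X ^ c) := by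
          linear_combination (-(b * X ^ c)) * hZ
      _ ≤ Z * (C * X * (k * X ^ (c + k - 1) + b * Z ^ (b - 1) * X ^ c)) := by
          gcongr Z * ?_
          exact hw.trans (by gcongr)
      _ = C * (k * Z + b * X) * X ^ (c + k) := by
          linear_combination (C * k * Z) * hX + (C * b * X * X ^ c) * hZ
  exact le_of_mul_le_mul_right key (pow_pos (norm_pos_iff.2 hx) _)

lemma not_wRegC (ha : 2 ≤ a) (hb : 0 < b) (hc : 0 < c) {d : ℕ} (hcd : c < d) :
    ¬ wRegC a b c d := by
  rintro ⟨C, hC, ε, hε, hw⟩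
  obtain ⟨k, rfl⟩ : ∃ k, d = c + k := ⟨d - c, by omega⟩
  have hk : 0 < k := by omega
  obtain ⟨ζ, hζ⟩ := IsAlgClosed.exists_pow_nat_eq (-1 : ℂ) hb
  let x : ℝ → ℂ := fun t => (t : ℂ) ^ b
  let z : ℝ → ℂ := fun t => ζ * (t : ℂ) ^ k
  have hcurve (t : ℝ) : z t ^ b = -x t ^ k := by
    simp only [x, z, mul_pow, ← pow_mul, hζ, mul_comm b k]
    ring
  have hsmall : ∀ᶠ t in 𝓝[>] (0 : ℝ),
      nrm3C (x t) 0 (z t) < ε ∧ C * (k * ‖z t‖ + b * ‖x t‖) < b := by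
    have hnrm : Continuous fun t => nrm3C (x t) 0 (z t) := by unfold nrm3C; fun_prop
    have hbound : Continuous fun t => C * (k * ‖z t‖ + b * ‖x t‖) := by fun_prop
    refine nhdsWithin_le_nhds (((hnrm.tendsto' 0 0 ?_).eventually_lt_const hε).and
      ((hbound.tendsto' 0 0 ?_).eventually_lt_const (by exact_mod_cast hb)))
    all_goals simp [x, z, nrm3C, hb.ne', hk.ne']
  obtain ⟨t, ⟨hε', hlt⟩, ht⟩ := (hsmall.and self_mem_nhdsWithin).exists
  have hx : x t ≠ 0 := pow_ne_zero _ (Complex.ofReal_ne_zero.2 (ne_of_gt ht))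
  exact hlt.not_ge <| le_of_norm_fzC_le_of_pow_eq_neg ha hb hc hC.le hx (hcurve t) <|
    hw _ _ _ (inXC_of_pow_eq_neg (by omega) hx (hcurve t)) hε'
      (gradNeC_of_pow_eq_neg hc hk hx (hcurve t))

end Necessity

/-- Kuo–Verdier (w)-regularity classification for y^a = z^b x^c + x^d in ℂ³ (Diagram 5). -/
theorem kuo_verdier_w_complex (a b c d : ℕ) (ha : 0 < a) (hb : 0 < b) (hc : 0 < c) (hd : 0 < d) :
    wRegC a b c d ↔ a = 1 ∨ d ≤ c := by
  refine ⟨fun hw => ?_, ?_⟩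
  · by_contra! h
    exact not_wRegC (by omega) hb hc h.2 hw
  · rintro (rfl | hdc)
    · exact wRegC_one hc
    · exact wRegC_of_le hb hd hdc
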